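/- Let a word w over S be the concatenation w = w₁w₂ of words w₁ and w₂, and let p, q ∈ S be such that (w₁)_G = p⁻¹q in G. Then wS = w₁S ∩ p⁻¹(q(w₂S)). -/

import Mathlib

/-- The action of a word over `S` (a list of pairs `(p, ε)` with `p ∈ S` and
`ε ∈ {+1, −1}` encoded as a `Bool`) on subsets of `S`:
`p^{+1} X = {p x : x ∈ X}` and `p^{−1} X = {q ∈ S : p q ∈ X}`. -/
def wordAct {G : Type*} [Group G] (S : Set G) : List (G × Bool) → Set G → Set G
  | [], X => X
  | l :: w, X =>
    if l.2 then (fun x => l.1 * x) '' wordAct S w X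
    else {q | q ∈ S ∧ l.1 * q ∈ wordAct S w X}

/-- Evaluation `(w)_G = p₁^{ε₁} ⋯ pₙ^{εₙ}` of a word in the group `G`. -/
def wordEval {G : Type*} [Group G] : List (G × Bool) → G
  | [] => 1
  | l :: w => (if l.2 then l.1 else l.1⁻¹) * wordEval w

/-!
A word `w` acts on subsets of `S` as the restriction of the left translation by `(w)_G`
to a fixed domain: `x ∈ wY` iff `x ∈ wS` and `(w)_G⁻¹ x ∈ Y`, for every `Y ⊆ S`.
Applied to `w₁` and `Y = w₂S`, with `(w₁)_G⁻¹ = q⁻¹p`, this is the claim.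
-/

section WordAct

variable {G : Type*} [Group G]

lemma wordAct_append (S : Set G) (w₁ w₂ : List (G × Bool)) (X : Set G) :
    wordAct S (w₁ ++ w₂) X = wordAct S w₁ (wordAct S w₂ X) := by
  induction w₁ with
  | nil => rfl
  | cons l w ih => simp [wordAct, ih]

lemma wordAct_subset (S : Submonoid G) (w : List (G × Bool)) (hw : ∀ l ∈ w, l.1 ∈ S)
    {X : Set G} (hX : X ⊆ S) : wordAct (S : Set G) w X ⊆ S := by
  induction w with
  | nil => exact hX
  | cons l w ih =>
    obtain ⟨a, ε⟩ := l
    have ha : a ∈ S := hw _ List.mem_cons_self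
    have hw' : wordAct (S : Set G) w X ⊆ S := ih fun l hl => hw l (List.mem_cons_of_mem _ hl)
    cases ε with
    | false => exact fun x hx => hx.1
    | true =>
      rintro _ ⟨y, hy, rfl⟩
      exact S.mul_mem ha (hw' hy)

lemma mem_wordAct_iff (S : Set G) (w : List (G × Bool)) {Y : Set G} (hY : Y ⊆ S) (x : G) :
    x ∈ wordAct S w Y ↔ x ∈ wordAct S w S ∧ (wordEval w)⁻¹ * x ∈ Y := by
  induction w generalizing x with
  | nil =>
    simp only [wordAct, wordEval, inv_one, one_mul]
    exact ⟨fun h => ⟨hY h, h⟩, And.right⟩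
  | cons l w ih =>
    obtain ⟨a, ε⟩ := l
    cases ε with
    | true =>
      simp only [wordAct, wordEval, if_true, Set.image_mul_left, Set.mem_preimage,
        mul_inv_rev, mul_assoc]
      exact ih _
    | false =>
      simp only [wordAct, wordEval, Bool.false_eq_true, if_false, Set.mem_ofPred_eq,
        mul_inv_rev, inv_inv, mul_assoc, ih (a * x)]
      tauto

end WordAct

theorem word_concat_act_eq_inter_general {G : Type*} [Group G] (S : Submonoid G)
    (w₁ w₂ : List (G × Bool)) (h₁ : ∀ l ∈ w₁, l.1 ∈ S) (h₂ : ∀ l ∈ w₂, l.1 ∈ S)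
    (p q : G) (hpq : wordEval w₁ = p⁻¹ * q) :
    wordAct (S : Set G) (w₁ ++ w₂) (S : Set G) =
      wordAct (S : Set G) w₁ (S : Set G) ∩
        {x | x ∈ (S : Set G) ∧
          p * x ∈ (fun y => q * y) '' wordAct (S : Set G) w₂ (S : Set G)} := by
  have hw₁ : wordAct (S : Set G) w₁ S ⊆ S := wordAct_subset S w₁ h₁ le_rfl
  have hw₂ : wordAct (S : Set G) w₂ S ⊆ S := wordAct_subset S w₂ h₂ le_rfl
  ext x
  rw [wordAct_append, mem_wordAct_iff _ _ hw₂, hpq, mul_inv_rev, inv_inv, mul_assoc,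
    Set.image_mul_left]
  exact ⟨fun ⟨hx, hpx⟩ => ⟨hx, hw₁ hx, hpx⟩, fun ⟨hx, _, hpx⟩ => ⟨hx, hpx⟩⟩

/-- Let a word `w` over `S` be the concatenation `w = w₁w₂`, and let `p, q ∈ S`
be such that `(w₁)_G = p⁻¹q` in `G`.  Then `wS = w₁S ∩ p⁻¹(q(w₂S))`, where
`q(·)` is the translation `qX = {qx : x ∈ X}` and `p⁻¹(·)` is the translation
`p⁻¹X = {x ∈ S : px ∈ X}`. -/
theorem word_concat_act_eq_inter {G : Type*} [Group G] (S : Submonoid G)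
    (w₁ w₂ : List (G × Bool)) (h₁ : ∀ l ∈ w₁, l.1 ∈ S) (h₂ : ∀ l ∈ w₂, l.1 ∈ S)
    (p q : G) (hp : p ∈ S) (hq : q ∈ S) (hpq : wordEval w₁ = p⁻¹ * q) :
    wordAct (S : Set G) (w₁ ++ w₂) (S : Set G) =
      wordAct (S : Set G) w₁ (S : Set G) ∩
        {x | x ∈ (S : Set G) ∧
          p * x ∈ (fun y => q * y) '' wordAct (S : Set G) w₂ (S : Set G)} :=
  word_concat_act_eq_inter_general S w₁ w₂ h₁ h₂ p q hpq
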